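/- arXiv:0801.3294 — 2 statements merged into one kernel-verified Lean document; each statement's English description precedes it below -/
import Mathlib

section
/- Every Smale space (X, d, φ) whose underlying space X is totally disconnected is topologically conjugate to (Σ_G, σ) for some finite directed graph G; that is, there is a homeomorphism h : X → Σ_G with h ∘ φ = σ ∘ h. -/
open Filter Topology Set

/-- A Smale space structure on a compact metric space. -/
structure SmaleSpace (X : Type) [MetricSpace X] : Type where
  compact : CompactSpace X
  phi : X ≃ₜ X
  eps : ℝ
  eps_pos : 0 < eps
  lam : ℝ
  lam_pos : 0 < lam
  lam_lt_one : lam < 1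
  bracket : X → X → X
  bracket_cont : ContinuousOn (fun p : X × X => bracket p.1 p.2) {p | dist p.1 p.2 ≤ eps}
  bracket_self : ∀ x, bracket x x = x
  bracket_eq₁ : ∀ x y z, dist x y ≤ eps → dist y z ≤ eps → dist x z ≤ eps →
    bracket x (bracket y z) = bracket x z
  bracket_eq₂ : ∀ x y z, dist x y ≤ eps → dist y z ≤ eps → dist x z ≤ eps →
    bracket (bracket x y) z = bracket x z
  bracket_phi : ∀ x y, dist x y ≤ eps → dist (phi x) (phi y) ≤ eps →
    phi (bracket x y) = bracket (phi x) (phi y)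
  contract_s : ∀ x y z, dist x y ≤ eps → bracket x y = y → dist x z ≤ eps → bracket x z = z →
    dist (phi y) (phi z) ≤ lam * dist y z
  contract_u : ∀ x y z, dist x y ≤ eps → bracket y x = y → dist x z ≤ eps → bracket z x = z →
    dist (phi.symm y) (phi.symm z) ≤ lam * dist y z

namespace SmaleSpace

variable {X : Type} [MetricSpace X]

/-- The local stable set `X^s(x, ε)`. -/
def locStable (S : SmaleSpace X) (x : X) (ε : ℝ) : Set X :=
  {y | dist x y ≤ ε ∧ S.bracket x y = y}

/-- The local unstable set `X^u(x, ε)`. -/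
def locUnstable (S : SmaleSpace X) (x : X) (ε : ℝ) : Set X :=
  {y | dist x y ≤ ε ∧ S.bracket y x = y}

end SmaleSpace

/-- Stable equivalence: the forward orbits are asymptotic. -/
def StableEquiv {X : Type} [MetricSpace X] (φ : X → X) (x y : X) : Prop :=
  Tendsto (fun n : ℕ => dist (φ^[n] x) (φ^[n] y)) atTop (𝓝 0)

/-- Unstable equivalence: the backward orbits are asymptotic. -/
def UnstableEquiv {X : Type} [MetricSpace X] (φ : X ≃ₜ X) (x y : X) : Prop :=
  Tendsto (fun n : ℕ => dist ((φ.symm : X → X)^[n] x) ((φ.symm : X → X)^[n] y)) atTop (𝓝 0)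

/-- A point-free formulation of non-wandering: every point is non-wandering. -/
def NonWandering {X : Type} [TopologicalSpace X] (φ : X → X) : Prop :=
  ∀ x : X, ∀ U ∈ 𝓝 x, ∃ n : ℕ, 1 ≤ n ∧ (φ^[n] '' U ∩ U).Nonempty

/-- A factor map between topological dynamical systems. -/
structure IsFactorMap {Y X : Type} [TopologicalSpace Y] [TopologicalSpace X]
    (ψ : Y ≃ₜ Y) (φ : X ≃ₜ X) (π : Y → X) : Prop where
  continuous : Continuous π
  surjective : Function.Surjective π
  semiconj : ∀ y, π (ψ y) = φ (π y)

/-- An `s`-resolving factor map: injective on stable equivalence classes. -/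
structure IsSResolving {Y X : Type} [MetricSpace Y] [MetricSpace X]
    (ψ : Y ≃ₜ Y) (φ : X ≃ₜ X) (π : Y → X) extends IsFactorMap ψ φ π : Prop where
  inj : ∀ y : Y, Set.InjOn π {y' | StableEquiv (⇑ψ) y y'}

/-- A `u`-resolving factor map: injective on unstable equivalence classes. -/
structure IsUResolving {Y X : Type} [MetricSpace Y] [MetricSpace X]
    (ψ : Y ≃ₜ Y) (φ : X ≃ₜ X) (π : Y → X) extends IsFactorMap ψ φ π : Prop where
  inj : ∀ y : Y, Set.InjOn π {y' | UnstableEquiv ψ y y'}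

/-- An `s`-bijective factor map: bijective from each stable class onto that of the image. -/
structure IsSBij {Y X : Type} [MetricSpace Y] [MetricSpace X]
    (ψ : Y ≃ₜ Y) (φ : X ≃ₜ X) (π : Y → X) extends IsFactorMap ψ φ π : Prop where
  bij : ∀ y : Y, Set.BijOn π {y' | StableEquiv (⇑ψ) y y'} {x | StableEquiv (⇑φ) (π y) x}

/-- A `u`-bijective factor map: bijective from each unstable class onto that of the image. -/
structure IsUBij {Y X : Type} [MetricSpace Y] [MetricSpace X]
    (ψ : Y ≃ₜ Y) (φ : X ≃ₜ X) (π : Y → X) extends IsFactorMap ψ φ π : Prop where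
  bij : ∀ y : Y, Set.BijOn π {y' | UnstableEquiv ψ y y'} {x | UnstableEquiv φ (π y) x}

/-- A finite directed graph. -/
structure FinGraph : Type 1 where
  V : Type
  E : Type
  [fV : Fintype V]
  [fE : Fintype E]
  [dV : DecidableEq V]
  [dE : DecidableEq E]
  src : E → V
  tgt : E → V

attribute [instance] FinGraph.fV FinGraph.fE FinGraph.dV FinGraph.dE

namespace FinGraph

/-- The space of bi-infinite edge paths of `G`. -/
abbrev PathSp (G : FinGraph) : Type := {e : ℤ → G.E // ∀ k, G.tgt (e k) = G.src (e (k + 1))}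

/-- The left shift on the path space. -/
def shift (G : FinGraph) : G.PathSp ≃ G.PathSp where
  toFun e := ⟨fun k => e.1 (k + 1), fun k => e.2 (k + 1)⟩
  invFun e := ⟨fun k => e.1 (k - 1), fun k => by
    dsimp only
    have h := e.2 (k - 1)
    rw [show k - 1 + 1 = k by ring] at h
    rw [show k + 1 - 1 = k by ring]
    exact h⟩
  left_inv e := Subtype.ext (funext fun k => congrArg e.1 (by ring))
  right_inv e := Subtype.ext (funext fun k => congrArg e.1 (by ring))

/-- The metric on the path space. -/
noncomputable def pathDist (G : FinGraph) (e f : G.PathSp) : ℝ :=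
  sInf ({1} ∪ {r | ∃ l : ℕ, r = (2 : ℝ) ^ (-(l : ℤ) - 1) ∧ ∀ k : ℤ, |k| ≤ (l : ℤ) → e.1 k = f.1 k})

/-- Splicing of two paths whose 0th edges terminate at the same vertex:
the past of `f` followed by the future of `e`. -/
def splice (G : FinGraph) (e f : G.PathSp) (h : G.tgt (e.1 0) = G.tgt (f.1 0)) : G.PathSp :=
  ⟨fun k => if k ≤ 0 then f.1 k else e.1 k, by
    intro k
    dsimp only
    rcases lt_trichotomy k 0 with hk | hk | hk
    · rw [if_pos hk.le, if_pos (by omega : k + 1 ≤ 0)]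
      exact f.2 k
    · subst hk
      rw [if_pos le_rfl, if_neg (by omega)]
      rw [← h]
      exact e.2 0
    · rw [if_neg (by omega), if_neg (by omega)]
      exact e.2 k⟩

end FinGraph

/-- Edge sets carry the discrete topology. -/
instance (G : FinGraph) : TopologicalSpace G.E := ⊥

instance (G : FinGraph) : DiscreteTopology G.E := ⟨rfl⟩

/-- The shift as a homeomorphism of the path space with its (product) topology. -/
def FinGraph.shiftH (G : FinGraph) : G.PathSp ≃ₜ G.PathSp where
  toEquiv := G.shift
  continuous_toFun := by
    apply Continuous.subtype_mk
    exact continuous_pi fun k => (continuous_apply (k + 1)).comp continuous_subtype_val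
  continuous_invFun := by
    apply Continuous.subtype_mk
    exact continuous_pi fun k => (continuous_apply (k - 1)).comp continuous_subtype_val

/-- A topological dynamical system is a shift of finite type if it is topologically
conjugate to the edge shift of some finite directed graph. -/
def IsSFT (A : Type) [TopologicalSpace A] (f : A → A) : Prop :=
  ∃ (G : FinGraph) (h : A ≃ₜ G.PathSp), ∀ a, h (f a) = G.shift (h a)


/-!
Pushing the bracket `[x, y]`, which lies in the local stable set of `x` and the local unstable set
of `y`, through the contraction estimates shows two things. Points whose orbits stay close on the
window `[-n, n]` are `2 λⁿ ε`-close, so the coding by a finite clopen partition of small mesh (which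
exists because `X` is compact and totally disconnected) separates orbits. And two points whose
codings agree on a long enough window `[-N, N]` can be spliced into one point with the future of
the first and the past of the second. The itinerary map into the graph of `(2N + 2)`-words that
occur is therefore injective, and it is onto because splicing realizes every finite stretch of a
path and compactness passes to the limit. A continuous bijection from a compact space is a
homeomorphism.
-/

namespace SmaleSpace

variable {X : Type} [MetricSpace X] (S : SmaleSpace X)

/-- Time reversal exchanges stable and unstable sets, so each estimate below need only be proved
in the stable direction. -/
def reverse : SmaleSpace X where
  compact := S.compact
  phi := S.phi⁻¹
  eps := S.eps
  eps_pos := S.eps_pos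
  lam := S.lam
  lam_pos := S.lam_pos
  lam_lt_one := S.lam_lt_one
  bracket x y := S.bracket y x
  bracket_cont := S.bracket_cont.comp continuous_swap.continuousOn fun p hp => by
    simpa [dist_comm] using hp
  bracket_self := S.bracket_self
  bracket_eq₁ x y z hxy hyz hxz := by
    rw [dist_comm] at hxy hyz hxz
    exact S.bracket_eq₂ z y x hyz hxy hxz
  bracket_eq₂ x y z hxy hyz hxz := by
    rw [dist_comm] at hxy hyz hxz
    exact S.bracket_eq₁ z y x hyz hxy hxz
  bracket_phi x y hxy hφ := by
    rw [dist_comm] at hxy hφ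
    have h := S.bracket_phi (S.phi.symm y) (S.phi.symm x) hφ (by simpa using hxy)
    simp only [Homeomorph.apply_symm_apply] at h
    simp only [Homeomorph.inv_apply, Homeomorph.symm_apply_eq, h]
  contract_s := S.contract_u
  contract_u := S.contract_s

@[simp] lemma reverse_phi : S.reverse.phi = S.phi⁻¹ := rfl
@[simp] lemma reverse_bracket (x y : X) : S.reverse.bracket x y = S.bracket y x := rfl

lemma lam_pow_mul_le {r : ℝ} (hr : 0 ≤ r) (n : ℕ) : S.lam ^ n * r ≤ r :=
  mul_le_of_le_one_left hr (pow_le_one₀ S.lam_pos.le S.lam_lt_one.le)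

lemma tendsto_two_mul_lam_pow_mul_eps :
    Tendsto (fun n : ℕ => 2 * S.lam ^ n * S.eps) atTop (𝓝 0) := by
  simpa using ((tendsto_pow_atTop_nhds_zero_of_lt_one S.lam_pos.le S.lam_lt_one).const_mul
    2).mul_const S.eps

lemma exists_dist_bracket_le {α : ℝ} (hα : 0 < α) :
    ∃ γ > 0, γ ≤ S.eps ∧ ∀ x y : X, dist x y ≤ γ → dist x (S.bracket x y) ≤ α := by
  have := S.compact
  have hK : IsCompact {p : X × X | dist p.1 p.2 ≤ S.eps} :=
    (isClosed_le continuous_dist continuous_const).isCompact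
  obtain ⟨δ, hδ, hunif⟩ := Metric.uniformContinuousOn_iff_le.1
    (hK.uniformContinuousOn_of_continuous S.bracket_cont) α hα
  refine ⟨min δ S.eps, lt_min hδ S.eps_pos, min_le_right _ _, fun x y hxy => ?_⟩
  have h := hunif (x, x) (by simpa using S.eps_pos.le) (x, y) (hxy.trans (min_le_right _ _))
    (by simpa [Prod.dist_eq] using hxy.trans (min_le_left _ _))
  simpa [S.bracket_self] using h

lemma bracket_mem_locStable {x y : X} (hxy : dist x y ≤ S.eps)
    (h : dist x (S.bracket x y) ≤ S.eps) : S.bracket x y ∈ S.locStable x S.eps :=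
  ⟨h, S.bracket_eq₁ x x y (by simpa using S.eps_pos.le) hxy hxy⟩

lemma pow_mem_locStable {x y : X} (hy : y ∈ S.locStable x S.eps) (n : ℕ) :
    (S.phi ^ n) y ∈ S.locStable ((S.phi ^ n) x) (S.lam ^ n * dist x y) := by
  induction n with
  | zero => simpa [locStable] using hy.2
  | succ n ih =>
    obtain ⟨hd, hb⟩ := ih
    have hd_eps := hd.trans ((S.lam_pow_mul_le dist_nonneg n).trans hy.1)
    have hd' : dist (S.phi ((S.phi ^ n) x)) (S.phi ((S.phi ^ n) y)) ≤
        S.lam ^ (n + 1) * dist x y :=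
      calc _ ≤ S.lam * dist ((S.phi ^ n) x) ((S.phi ^ n) y) :=
            S.contract_s _ _ _ (by simpa using S.eps_pos.le) (S.bracket_self _) hd_eps hb
        _ ≤ S.lam * (S.lam ^ n * dist x y) := by gcongr; exact S.lam_pos.le
        _ = _ := by ring
    rw [pow_succ', Homeomorph.mul_apply, Homeomorph.mul_apply]
    refine ⟨hd', ?_⟩
    rw [← S.bracket_phi _ _ hd_eps (hd'.trans ((S.lam_pow_mul_le dist_nonneg _).trans hy.1)), hb]

lemma pow_apply_bracket {x y : X} {n : ℕ}
    (h : ∀ j ≤ n, dist ((S.phi ^ j) x) ((S.phi ^ j) y) ≤ S.eps) :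
    (S.phi ^ n) (S.bracket x y) = S.bracket ((S.phi ^ n) x) ((S.phi ^ n) y) := by
  induction n with
  | zero => rfl
  | succ n ih =>
    have hsucc := h (n + 1) le_rfl
    simp only [pow_succ', Homeomorph.mul_apply] at hsucc ⊢
    rw [ih fun j hj => h j (by omega), S.bracket_phi _ _ (h n n.le_succ) hsucc]

lemma exists_dist_bracket_le_of_orbits_close : ∃ γ > 0, ∀ (n : ℕ) (x y : X),
    (∀ k : ℤ, |k| ≤ n → dist ((S.phi ^ k) x) ((S.phi ^ k) y) ≤ γ) →
    dist x (S.bracket x y) ≤ S.lam ^ n * S.eps := by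
  obtain ⟨γ, hγ, hγε, hbr⟩ := S.exists_dist_bracket_le S.eps_pos
  refine ⟨γ, hγ, fun n x y hxy => ?_⟩
  have hback (j : ℕ) (z : X) :
      (S.phi ^ j) ((S.phi ^ (-(n : ℤ))) z) = (S.phi ^ ((j : ℤ) - n)) z := by
    rw [sub_eq_add_neg, zpow_add, zpow_natCast, Homeomorph.mul_apply]
  set x' := (S.phi ^ (-(n : ℤ))) x
  set y' := (S.phi ^ (-(n : ℤ))) y
  have hclose : ∀ j ≤ n, dist ((S.phi ^ j) x') ((S.phi ^ j) y') ≤ S.eps := fun j hj => by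
    rw [hback, hback]
    exact (hxy _ (abs_le.2 ⟨by omega, by omega⟩)).trans hγε
  have hx : (S.phi ^ n) x' = x := by simp [x']
  have hy : (S.phi ^ n) y' = y := by simp [y']
  have hxy' : dist x' y' ≤ γ := hxy (-n) (by simp)
  have hmem := S.pow_mem_locStable (S.bracket_mem_locStable (hxy'.trans hγε) (hbr _ _ hxy')) n
  rw [S.pow_apply_bracket hclose, hx, hy] at hmem
  exact hmem.1.trans (mul_le_mul_of_nonneg_left (hbr _ _ hxy') (pow_nonneg S.lam_pos.le n))

lemma exists_dist_le_of_orbits_close : ∃ γ > 0, ∀ (n : ℕ) (x y : X),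
    (∀ k : ℤ, |k| ≤ n → dist ((S.phi ^ k) x) ((S.phi ^ k) y) ≤ γ) →
    dist x y ≤ 2 * S.lam ^ n * S.eps := by
  obtain ⟨γ₁, hγ₁, h₁⟩ := S.exists_dist_bracket_le_of_orbits_close
  obtain ⟨γ₂, hγ₂, h₂⟩ := S.reverse.exists_dist_bracket_le_of_orbits_close
  refine ⟨min γ₁ γ₂, lt_min hγ₁ hγ₂, fun n x y hxy => ?_⟩
  have hx := h₁ n x y fun k hk => (hxy k hk).trans (min_le_left _ _)
  have hy : dist y (S.bracket x y) ≤ S.lam ^ n * S.eps := h₂ n y x fun k hk => by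
    simpa [inv_zpow', dist_comm] using (hxy (-k) (by simpa using hk)).trans (min_le_right _ _)
  calc dist x y ≤ dist x (S.bracket x y) + dist y (S.bracket x y) := dist_triangle_right _ _ _
    _ ≤ _ := by linarith

lemma exists_dist_pow_bracket_lt {ε : ℝ} (hε : 0 < ε) : ∃ γ > 0, ∀ x y : X, dist x y ≤ γ →
    ∀ n : ℕ, dist ((S.phi ^ n) x) ((S.phi ^ n) (S.bracket x y)) < ε := by
  obtain ⟨γ, hγ, hγε, hbr⟩ := S.exists_dist_bracket_le (lt_min S.eps_pos (half_pos hε))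
  refine ⟨γ, hγ, fun x y hxy n => ?_⟩
  have hd := hbr x y hxy
  have hmem := S.pow_mem_locStable
    (S.bracket_mem_locStable (hxy.trans hγε) (hd.trans (min_le_left _ _))) n
  calc _ ≤ S.lam ^ n * dist x (S.bracket x y) := hmem.1
    _ ≤ dist x (S.bracket x y) := S.lam_pow_mul_le dist_nonneg n
    _ ≤ ε / 2 := hd.trans (min_le_right _ _)
    _ < ε := half_lt_self hε

lemma exists_dist_zpow_bracket_lt {ε : ℝ} (hε : 0 < ε) : ∃ γ > 0, ∀ x y : X, dist x y ≤ γ →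
    ∀ k : ℤ, (0 ≤ k → dist ((S.phi ^ k) x) ((S.phi ^ k) (S.bracket x y)) < ε) ∧
      (k ≤ 0 → dist ((S.phi ^ k) y) ((S.phi ^ k) (S.bracket x y)) < ε) := by
  obtain ⟨γ₁, hγ₁, h₁⟩ := S.exists_dist_pow_bracket_lt hε
  obtain ⟨γ₂, hγ₂, h₂⟩ := S.reverse.exists_dist_pow_bracket_lt hε
  refine ⟨min γ₁ γ₂, lt_min hγ₁ hγ₂, fun x y hxy k => ⟨fun hk => ?_, fun hk => ?_⟩⟩
  · lift k to ℕ using hk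
    simpa using h₁ x y (hxy.trans (min_le_left _ _)) k
  · obtain ⟨n, rfl⟩ := Int.exists_eq_neg_ofNat hk
    simpa [inv_pow] using h₂ y x (by rw [dist_comm]; exact hxy.trans (min_le_right _ _)) n

end SmaleSpace

section Coding

variable {X ι : Type} [TopologicalSpace X] (f : X ≃ₜ X) (c : X → ι)

def SeparatesOrbits : Prop :=
  ∀ x y : X, (∀ k : ℤ, c ((f ^ k) x) = c ((f ^ k) y)) → x = y

def HasSplicing (N : ℕ) : Prop :=
  ∀ x y : X, (∀ k : ℤ, |k| ≤ N → c ((f ^ k) x) = c ((f ^ k) y)) →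
    ∃ z, ∀ k : ℤ, (0 ≤ k → c ((f ^ k) z) = c ((f ^ k) x)) ∧ (k ≤ 0 → c ((f ^ k) z) = c ((f ^ k) y))

def FollowsOn (a : ℤ → ι) (I : Set ℤ) (x : X) : Prop :=
  ∀ k ∈ I, c ((f ^ k) x) = a k

variable {f c} in
lemma HasSplicing.extend {N : ℕ} (hs : HasSplicing f c N) {a : ℤ → ι} {L R : ℤ}
    (hLR : L + 2 * N ≤ R) {y w : X} (hy : FollowsOn f c a (Icc L R) y)
    (hw : FollowsOn f c a (Icc (R - 2 * N) (R + 1)) w) :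
    ∃ z, FollowsOn f c a (Icc L (R + 1)) z := by
  have hshift : ∀ (s t : ℤ) (x : X), (f ^ t) ((f ^ s) x) = (f ^ (t + s)) x := fun s t x => by
    rw [zpow_add, Homeomorph.mul_apply]
  -- splice at the centre `R - N` of the overlap `[R - 2N, R]`
  obtain ⟨z, hz⟩ := hs ((f ^ (R - N)) w) ((f ^ (R - N)) y) fun k hk => by
    obtain ⟨hk₁, hk₂⟩ := abs_le.1 hk
    rw [hshift, hshift, hw _ ⟨by omega, by omega⟩, hy _ ⟨by omega, by omega⟩]
  refine ⟨(f ^ (-(R - N))) z, fun t ⟨hLt, htR⟩ => ?_⟩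
  rw [hshift]
  rcases le_total 0 (t + -(R - N)) with h | h
  · rw [(hz _).1 h, hshift, hw _ ⟨by omega, by omega⟩]
    ring_nf
  · rw [(hz _).2 h, hshift, hy _ ⟨by omega, by omega⟩]
    ring_nf

variable [Fintype ι] [DecidableEq ι]

noncomputable def wordGraph (m : ℕ) : FinGraph where
  V := Fin m → ι
  E := {w : Fin (m + 1) → ι // ∃ x : X, ∀ j : Fin (m + 1), c ((f ^ (j : ℤ)) x) = w j}
  fE := Fintype.ofFinite _
  src w j := w.1 j.castSucc
  tgt w j := w.1 j.succ

noncomputable def itinerary (m : ℕ) (x : X) : (wordGraph f c m).PathSp :=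
  ⟨fun k => ⟨fun j => c ((f ^ (k + j)) x), (f ^ k) x, fun j => by
      rw [← Homeomorph.mul_apply, ← zpow_add, add_comm]⟩,
    fun k => funext fun j => by
      change c ((f ^ (k + (j + 1 : ℕ))) x) = c ((f ^ (k + 1 + (j : ℕ))) x)
      push_cast
      ring_nf⟩

@[simp] lemma itinerary_apply (m : ℕ) (x : X) (k : ℤ) (j : Fin (m + 1)) :
    ((itinerary f c m x).1 k).1 j = c ((f ^ (k + j)) x) := rfl

lemma semiconj_itinerary (m : ℕ) :
    Function.Semiconj (itinerary f c m) f (wordGraph f c m).shift := fun x => by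
  refine Subtype.ext (funext fun k => Subtype.ext (funext fun j => ?_))
  change c ((f ^ (k + j)) (f x)) = c ((f ^ (k + 1 + j)) x)
  rw [add_right_comm, zpow_add_one, Homeomorph.mul_apply]

lemma continuous_itinerary [TopologicalSpace ι] [DiscreteTopology ι] (hc : Continuous c)
    (m : ℕ) : Continuous (itinerary f c m) := by
  refine Continuous.subtype_mk (continuous_pi fun k => continuous_discrete_rng.2 fun e => ?_) _
  have hword : Continuous fun x (j : Fin (m + 1)) => c ((f ^ (k + j)) x) :=
    continuous_pi fun j => hc.comp (f ^ _).continuous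
  convert (isOpen_discrete {e.1}).preimage hword
  ext x
  exact Subtype.ext_iff

lemma itinerary_injective (hsep : SeparatesOrbits f c) (m : ℕ) :
    Function.Injective (itinerary f c m) := fun x y hxy =>
  hsep x y fun k => by simpa using congrArg (fun p => (p.1 k).1 0) hxy

variable {f c}

def pathLetters {m : ℕ} (p : (wordGraph f c m).PathSp) (k : ℤ) : ι := (p.1 k).1 0

lemma path_apply_eq_pathLetters {m : ℕ} (p : (wordGraph f c m).PathSp) (k : ℤ)
    (j : Fin (m + 1)) : (p.1 k).1 j = pathLetters p (k + j) := by
  obtain ⟨j, hj⟩ := j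
  induction j generalizing k with
  | zero => simp [pathLetters]
  | succ j ih =>
    have hstep := congrFun (p.2 k) ⟨j, by omega⟩
    change (p.1 k).1 ⟨j + 1, hj⟩ = (p.1 (k + 1)).1 ⟨j, _⟩ at hstep
    rw [hstep, ih (k + 1) (by omega)]
    congr 1
    push_cast
    ring

lemma exists_followsOn_edge {m : ℕ} (p : (wordGraph f c m).PathSp) (k : ℤ) :
    ∃ x, FollowsOn f c (pathLetters p) (Icc k (k + m)) x := by
  obtain ⟨x, hx⟩ := (p.1 k).2
  refine ⟨(f ^ (-k)) x, fun t ⟨hkt, htk⟩ => ?_⟩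
  obtain ⟨j, rfl⟩ : ∃ j : ℕ, t = k + j := ⟨(t - k).toNat, by omega⟩
  have hj : j < m + 1 := by omega
  rw [← Homeomorph.mul_apply, ← zpow_add, show k + j + -k = ((j : ℕ) : ℤ) by ring,
    ← path_apply_eq_pathLetters p k ⟨j, hj⟩]
  exact hx ⟨j, hj⟩

lemma HasSplicing.exists_followsOn {N : ℕ} (hs : HasSplicing f c N)
    (p : (wordGraph f c (2 * N + 1)).PathSp) (L : ℤ) (n : ℕ) :
    ∃ x, FollowsOn f c (pathLetters p) (Icc L (L + (2 * N + 1 : ℕ) + n)) x := by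
  induction n with
  | zero => simpa using exists_followsOn_edge p L
  | succ n ih =>
    obtain ⟨y, hy⟩ := ih
    obtain ⟨w, hw⟩ := exists_followsOn_edge p (L + n + 1)
    push_cast at hy hw ⊢
    obtain ⟨z, hz⟩ := hs.extend (by omega) hy (by convert hw using 2 <;> ring)
    exact ⟨z, by convert hz using 2; ring⟩

lemma HasSplicing.itinerary_surjective [CompactSpace X] [TopologicalSpace ι] [DiscreteTopology ι]
    (hc : Continuous c) {N : ℕ} (hs : HasSplicing f c N) :
    Function.Surjective (itinerary f c (2 * N + 1)) := by
  intro p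
  have hclosed (k : ℤ) : IsClosed {x | c ((f ^ k) x) = pathLetters p k} :=
    (isClosed_discrete {pathLetters p k}).preimage (hc.comp (f ^ k).continuous)
  obtain ⟨x, -, hx⟩ := isCompact_univ.inter_iInter_nonempty _ hclosed fun u => by
    obtain ⟨M, hM⟩ : ∃ M : ℕ, ∀ k ∈ u, |k| ≤ M :=
      ⟨u.sup Int.natAbs, fun k hk => by
        rw [Int.abs_eq_natAbs]; exact_mod_cast Finset.le_sup (f := Int.natAbs) hk⟩
    obtain ⟨x, hx⟩ := hs.exists_followsOn p (-M) (2 * M)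
    refine ⟨x, mem_univ x, mem_iInter₂.2 fun k hk => hx k ?_⟩
    obtain ⟨hk₁, hk₂⟩ := abs_le.1 (hM k hk)
    constructor <;> push_cast <;> omega
  refine ⟨x, Subtype.ext (funext fun k => Subtype.ext (funext fun j => ?_))⟩
  rw [itinerary_apply, path_apply_eq_pathLetters]
  exact mem_iInter.1 hx (k + j)

theorem isSFT_of_hasSplicing [CompactSpace X] [TopologicalSpace ι] [DiscreteTopology ι]
    (hc : Continuous c) (hsep : SeparatesOrbits f c) {N : ℕ} (hs : HasSplicing f c N) :
    IsSFT X f :=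
  ⟨wordGraph f c (2 * N + 1),
    (continuous_itinerary f c hc _).homeoOfEquivCompactToT2
      (f := .ofBijective _ ⟨itinerary_injective f c hsep _, hs.itinerary_surjective hc⟩),
    semiconj_itinerary f c _⟩

end Coding

lemma exists_continuous_fin_dist_le {X : Type} [MetricSpace X] [CompactSpace X]
    [TotallyDisconnectedSpace X] {r : ℝ} (hr : 0 < r) :
    ∃ (n : ℕ) (c : X → Fin n), Continuous c ∧ ∀ x y, c x = c y → dist x y ≤ r := by
  have hdiag : {p : X × X | dist p.1 p.2 < r / 2} ∈ 𝓝ˢ (diagonal X) :=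
    (isOpen_lt continuous_dist continuous_const).mem_nhdsSet.2 fun p hp => by
      simpa [(mem_diagonal_iff.1 hp)] using half_pos hr
  obtain ⟨n, c, z, hc, hz⟩ :=
    (ContinuousMap.id X).exists_finite_approximation_of_mem_nhds_diagonal hdiag
  refine ⟨n, c, hc, fun x y hxy => ?_⟩
  have hx : dist x (z (c x)) < r / 2 := hz x
  have hy : dist y (z (c x)) < r / 2 := hxy ▸ hz y
  linarith [dist_triangle_right x y (z (c x))]

lemma Continuous.exists_forall_dist_lt_imp_eq {X ι : Type} [MetricSpace X] [CompactSpace X]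
    [TopologicalSpace ι] [DiscreteTopology ι] {c : X → ι} (hc : Continuous c) :
    ∃ δ > 0, ∀ x y, dist x y < δ → c x = c y := by
  obtain ⟨δ, hδ, h⟩ := lebesgue_number_lemma_of_metric isCompact_univ
    (fun i => (isOpen_discrete {i}).preimage hc) fun x _ => mem_iUnion.2 ⟨c x, rfl⟩
  refine ⟨δ, hδ, fun x y hxy => ?_⟩
  obtain ⟨i, hi⟩ := h x (mem_univ x)
  exact (hi (Metric.mem_ball_self hδ)).trans (hi (Metric.mem_ball.2 (by rwa [dist_comm]))).symm

namespace SmaleSpace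

variable {X ι : Type} [MetricSpace X] (S : SmaleSpace X) {c : X → ι}

lemma separatesOrbits_of_dist_le (hc : ∀ (N : ℕ) (x y : X),
    (∀ k : ℤ, |k| ≤ N → c ((S.phi ^ k) x) = c ((S.phi ^ k) y)) →
    dist x y ≤ 2 * S.lam ^ N * S.eps) : SeparatesOrbits S.phi c := fun x y h =>
  dist_le_zero.1 <| ge_of_tendsto' S.tendsto_two_mul_lam_pow_mul_eps fun N =>
    hc N x y fun k _ => h k

lemma exists_hasSplicing [TopologicalSpace ι] [DiscreteTopology ι] (hcont : Continuous c)
    (hc : ∀ (N : ℕ) (x y : X), (∀ k : ℤ, |k| ≤ N → c ((S.phi ^ k) x) = c ((S.phi ^ k) y)) →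
      dist x y ≤ 2 * S.lam ^ N * S.eps) :
    ∃ N, HasSplicing S.phi c N := by
  have := S.compact
  obtain ⟨g, hg, hgap⟩ := hcont.exists_forall_dist_lt_imp_eq
  obtain ⟨γ, hγ, hshadow⟩ := S.exists_dist_zpow_bracket_lt hg
  obtain ⟨N, hN⟩ := (S.tendsto_two_mul_lam_pow_mul_eps.eventually (ge_mem_nhds hγ)).exists
  refine ⟨N, fun x y hxy => ⟨S.bracket x y, fun k => ?_⟩⟩
  have h := hshadow x y ((hc N x y hxy).trans hN) k
  exact ⟨fun hk => (hgap _ _ (h.1 hk)).symm, fun hk => (hgap _ _ (h.2 hk)).symm⟩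

lemma exists_coding [TotallyDisconnectedSpace X] : ∃ (n : ℕ) (c : X → Fin n), Continuous c ∧
    ∀ (N : ℕ) (x y : X), (∀ k : ℤ, |k| ≤ N → c ((S.phi ^ k) x) = c ((S.phi ^ k) y)) →
      dist x y ≤ 2 * S.lam ^ N * S.eps := by
  have := S.compact
  obtain ⟨γ, hγ, hclose⟩ := S.exists_dist_le_of_orbits_close
  obtain ⟨n, c, hc, hcγ⟩ := exists_continuous_fin_dist_le (X := X) hγ
  exact ⟨n, c, hc, fun N x y h => hclose N x y fun k hk => hcγ _ _ (h k hk)⟩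

end SmaleSpace

/-- Every Smale space whose underlying space is totally disconnected is
topologically conjugate to the shift of finite type `(Σ_G, σ)` of some finite directed graph:
there is a homeomorphism `h : X → Σ_G` with `h ∘ φ = σ ∘ h`. -/
theorem totally_disconnected_smale_space_is_SFT {X : Type} [MetricSpace X]
    (S : SmaleSpace X) (htd : TotallyDisconnectedSpace X) :
    ∃ (G : FinGraph) (h : X ≃ₜ G.PathSp), ∀ x : X, h (S.phi x) = G.shift (h x) := by
  have := S.compact
  obtain ⟨n, c, hcont, hc⟩ := S.exists_coding
  obtain ⟨N, hs⟩ := S.exists_hasSplicing hcont hc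
  exact isSFT_of_hasSplicing hcont (S.separatesOrbits_of_dist_le hc) hs
end

section
/- Let π : (Y, ψ) → (X, φ) be an s-bijective factor map between Smale spaces. Then π is a local homeomorphism from local stable sets of Y to local stable sets of X: for every y ∈ Y there exist ε, ε' > 0 such that π restricted to Y^s(y, ε) is a homeomorphism onto a subset of X^s(π(y), ε') that contains X^s(π(y), ε'') for some ε'' > 0. -/
open Filter Topology Set

/-! On a small local stable set `π` is injective because it is injective on stable classes, and
it is an embedding by compactness. It maps `Y^s(y, ε)` into a local stable set because, for small
radii, local stable sets are exactly the sets of points whose forward orbits stay close, and `π` is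
uniformly continuous. For the converse inclusion, pull a point `x ∈ X^s(π y, ε'')` back to `z`
stably equivalent to `y`; if `z ∉ Y^s(y, ε)`, take the last time `M` at which the orbits of `y`
and `z` are `ε`-apart. Such pairs form a compact set on which `π` identifies no points (equal
images and close forward orbits force stable equivalence), so their images are `η`-apart for a
fixed `η > 0`, whereas the images at time `M` are within `ε'' < η`.
-/

lemma IsCompact.isEmbedding_domRestrict {α β : Type*} [TopologicalSpace α] [TopologicalSpace β]
    [T2Space β] {s : Set α} {f : α → β} (hs : IsCompact s) (hf : Continuous f) (hinj : InjOn f s) :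
    IsEmbedding (s.domRestrict f) :=
  have : CompactSpace s := isCompact_iff_compactSpace.mp hs
  ((hf.comp continuous_subtype_val).isClosedEmbedding hinj.injective).isEmbedding

namespace SmaleSpace

variable {X : Type} [MetricSpace X] (S : SmaleSpace X)

lemma locStable_mono {x : X} {ε ε' : ℝ} (h : ε ≤ ε') : S.locStable x ε ⊆ S.locStable x ε' :=
  fun _ hy => ⟨hy.1.trans h, hy.2⟩

lemma phi_mem_locStable {a b : X} {ε : ℝ} (hε : ε ≤ S.eps) (hb : b ∈ S.locStable a ε) :
    S.phi b ∈ S.locStable (S.phi a) (S.lam * ε) := by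
  have hab : dist a b ≤ S.eps := hb.1.trans hε
  have hdist : dist (S.phi a) (S.phi b) ≤ S.lam * ε :=
    (S.contract_s a a b (by simp [S.eps_pos.le]) (S.bracket_self a) hab hb.2).trans
      (mul_le_mul_of_nonneg_left hb.1 S.lam_pos.le)
  have hlam : S.lam * ε ≤ S.eps :=
    (mul_le_of_le_one_left (dist_nonneg.trans hb.1) S.lam_lt_one.le).trans hε
  exact ⟨hdist, by rw [← S.bracket_phi a b hab (hdist.trans hlam), hb.2]⟩

lemma iterate_mem_locStable {a b : X} {ε : ℝ} (hε : ε ≤ S.eps) (hb : b ∈ S.locStable a ε)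
    (n : ℕ) : (⇑S.phi)^[n] b ∈ S.locStable ((⇑S.phi)^[n] a) (S.lam ^ n * ε) := by
  induction n with
  | zero => simpa using hb
  | succ n ih =>
    have hle : S.lam ^ n * ε ≤ S.eps :=
      (mul_le_of_le_one_left (dist_nonneg.trans hb.1)
        (pow_le_one₀ S.lam_pos.le S.lam_lt_one.le)).trans hε
    rw [Function.iterate_succ_apply', Function.iterate_succ_apply', pow_succ', mul_assoc]
    exact S.phi_mem_locStable hle ih

lemma dist_iterate_le_of_mem_locStable {a b : X} {ε : ℝ} (hε : ε ≤ S.eps)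
    (hb : b ∈ S.locStable a ε) (n : ℕ) : dist ((⇑S.phi)^[n] a) ((⇑S.phi)^[n] b) ≤ ε :=
  (S.iterate_mem_locStable hε hb n).1.trans <| mul_le_of_le_one_left
    (dist_nonneg.trans hb.1) (pow_le_one₀ S.lam_pos.le S.lam_lt_one.le)

lemma stableEquiv_of_mem_locStable {a b : X} {ε : ℝ} (hε : ε ≤ S.eps)
    (hb : b ∈ S.locStable a ε) : StableEquiv S.phi a b := by
  have hlim : Tendsto (fun n : ℕ => S.lam ^ n * ε) atTop (𝓝 0) := by
    simpa using (tendsto_pow_atTop_nhds_zero_of_lt_one S.lam_pos.le S.lam_lt_one).mul_const ε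
  exact squeeze_zero (fun _ => dist_nonneg) (fun n => (S.iterate_mem_locStable hε hb n).1) hlim

lemma injOn_locStable {Z : Type} {π : X → Z} (hπ : ∀ x, InjOn π {x' | StableEquiv S.phi x x'})
    (x : X) {ε : ℝ} (hε : ε ≤ S.eps) : InjOn π (S.locStable x ε) :=
  fun _ ha _ hb => (hπ x).mono (fun _ => S.stableEquiv_of_mem_locStable hε) ha hb

lemma isClosed_locStable (x : X) {ε : ℝ} (hε : ε ≤ S.eps) : IsClosed (S.locStable x ε) := by
  have hball : IsClosed {z : X | dist x z ≤ ε} :=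
    isClosed_le (continuous_const.dist continuous_id) continuous_const
  have hbracket : ContinuousOn (fun z => S.bracket x z) {z : X | dist x z ≤ ε} :=
    S.bracket_cont.comp (continuous_const.prodMk continuous_id).continuousOn
      (fun _ hz => le_trans hz hε)
  exact hball.isClosed_eq hbracket continuousOn_id

lemma phi_mem_locUnstable {w b : X} (hw : w ∈ S.locUnstable b S.eps)
    (h : dist (S.phi b) (S.phi w) ≤ S.eps) : S.phi w ∈ S.locUnstable (S.phi b) S.eps := by
  refine ⟨h, ?_⟩
  rw [← S.bracket_phi w b (by rw [dist_comm]; exact hw.1) (by rw [dist_comm]; exact h), hw.2]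

lemma dist_le_lam_mul_of_phi_mem_locUnstable {w b : X}
    (hw : S.phi w ∈ S.locUnstable (S.phi b) S.eps) :
    dist w b ≤ S.lam * dist (S.phi w) (S.phi b) := by
  simpa using S.contract_u (S.phi b) (S.phi w) (S.phi b) hw.1 hw.2 (by simp [S.eps_pos.le])
    (S.bracket_self _)

lemma eq_of_forall_iterate_mem_locUnstable {w b : X}
    (h : ∀ n, (⇑S.phi)^[n] w ∈ S.locUnstable ((⇑S.phi)^[n] b) S.eps) : w = b := by
  have hback : ∀ n, dist w b ≤ S.lam ^ n * dist ((⇑S.phi)^[n] w) ((⇑S.phi)^[n] b) := by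
    intro n
    induction n with
    | zero => simp
    | succ n ih =>
      have hstep := S.dist_le_lam_mul_of_phi_mem_locUnstable (w := (⇑S.phi)^[n] w)
        (b := (⇑S.phi)^[n] b) (by simpa only [Function.iterate_succ_apply'] using h (n + 1))
      rw [← Function.iterate_succ_apply' (f := S.phi), ← Function.iterate_succ_apply' (f := S.phi)]
        at hstep
      calc dist w b ≤ S.lam ^ n * dist ((⇑S.phi)^[n] w) ((⇑S.phi)^[n] b) := ih
        _ ≤ S.lam ^ n * (S.lam * dist ((⇑S.phi)^[n + 1] w) ((⇑S.phi)^[n + 1] b)) :=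
          mul_le_mul_of_nonneg_left hstep (pow_nonneg S.lam_pos.le n)
        _ = S.lam ^ (n + 1) * dist ((⇑S.phi)^[n + 1] w) ((⇑S.phi)^[n + 1] b) := by ring
  have hlim : Tendsto (fun n : ℕ => S.lam ^ n * S.eps) atTop (𝓝 0) := by
    simpa using (tendsto_pow_atTop_nhds_zero_of_lt_one S.lam_pos.le S.lam_lt_one).mul_const S.eps
  refine dist_le_zero.mp (ge_of_tendsto hlim (Eventually.of_forall fun n => ?_))
  exact (hback n).trans <| mul_le_mul_of_nonneg_left ((dist_comm _ _).trans_le (h n).1)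
    (pow_nonneg S.lam_pos.le n)

lemma exists_dist_bracket_lt {η : ℝ} (hη : 0 < η) :
    ∃ δ > 0, ∀ a b : X, dist a b ≤ δ → dist a (S.bracket a b) < η := by
  have := S.compact
  have hK : IsCompact {p : X × X | dist p.1 p.2 ≤ S.eps} :=
    (isClosed_le (continuous_fst.dist continuous_snd) continuous_const).isCompact
  obtain ⟨δ, hδ, hδη⟩ := Metric.uniformContinuousOn_iff.mp
    (hK.uniformContinuousOn_of_continuous S.bracket_cont) η hη
  refine ⟨min (δ / 2) S.eps, lt_min (half_pos hδ) S.eps_pos, fun a b hab => ?_⟩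
  have hclose : dist (a, a) (a, b) < δ := by
    rw [Prod.dist_eq, dist_self, max_eq_right dist_nonneg]
    linarith [min_le_left (δ / 2) S.eps]
  simpa [S.bracket_self] using
    hδη (a, a) (by simp [S.eps_pos.le]) (a, b) (hab.trans (min_le_right _ _)) hclose

structure IsStableRadius (δ : ℝ) : Prop where
  pos : 0 < δ
  le_eps : δ ≤ S.eps
  mem_locStable : ∀ ε ≤ δ, ∀ a b : X,
    (∀ n, dist ((⇑S.phi)^[n] a) ((⇑S.phi)^[n] b) ≤ ε) → b ∈ S.locStable a ε

/- If the forward orbits of `a` and `b` stay close, then `w = [a, b]` lies in the local stable set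
of `a` and in the local unstable set of `b`, so the forward orbits of `w` and `b` stay within the
unstable range `S.eps`; backward contraction then forces `w = b`. -/
lemma exists_isStableRadius : ∃ δ, S.IsStableRadius δ := by
  obtain ⟨δ, hδ, hbracket⟩ := S.exists_dist_bracket_lt (half_pos S.eps_pos)
  refine ⟨min δ (S.eps / 2), lt_min hδ (half_pos S.eps_pos),
    (min_le_right _ _).trans (half_le_self S.eps_pos.le), fun ε hε a b hab => ?_⟩
  have hεδ : ε ≤ δ := hε.trans (min_le_left _ _)
  have hεeps : ε ≤ S.eps / 2 := hε.trans (min_le_right _ _)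
  have habε : dist a b ≤ ε := by simpa using hab 0
  refine ⟨habε, ?_⟩
  have hab0 : dist a b ≤ S.eps := by linarith [S.eps_pos]
  set w := S.bracket a b
  have hw_stable : w ∈ S.locStable a (S.eps / 2) :=
    ⟨(hbracket a b (habε.trans hεδ)).le,
      S.bracket_eq₁ a a b (by simp [S.eps_pos.le]) hab0 hab0⟩
  have hw_unstable : w ∈ S.locUnstable b S.eps :=
    ⟨by linarith [dist_triangle b a w, dist_comm a b, hw_stable.1],
      S.bracket_eq₂ a b b hab0 (by simp [S.eps_pos.le]) hab0⟩
  have hdist : ∀ n, dist ((⇑S.phi)^[n] b) ((⇑S.phi)^[n] w) ≤ S.eps := fun n => by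
    linarith [dist_triangle ((⇑S.phi)^[n] b) ((⇑S.phi)^[n] a) ((⇑S.phi)^[n] w),
      dist_comm ((⇑S.phi)^[n] a) ((⇑S.phi)^[n] b), hab n,
      S.dist_iterate_le_of_mem_locStable (by linarith [S.eps_pos]) hw_stable n]
  have hiter : ∀ n, (⇑S.phi)^[n] w ∈ S.locUnstable ((⇑S.phi)^[n] b) S.eps := by
    intro n
    induction n with
    | zero => exact hw_unstable
    | succ n ih =>
      rw [Function.iterate_succ_apply', Function.iterate_succ_apply']
      exact S.phi_mem_locUnstable ih
        (by simpa only [Function.iterate_succ_apply'] using hdist (n + 1))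
  exact S.eq_of_forall_iterate_mem_locUnstable hiter

end SmaleSpace

namespace StableEquiv

variable {X : Type} [MetricSpace X] {f : X → X}

lemma refl (x : X) : StableEquiv f x x := by
  simpa only [StableEquiv, dist_self] using tendsto_const_nhds

lemma of_apply {a b : X} (h : StableEquiv f (f a) (f b)) : StableEquiv f a b := by
  refine (tendsto_add_atTop_iff_nat 1).mp ?_
  simpa only [StableEquiv, Function.iterate_succ_apply] using h

end StableEquiv

lemma exists_lt_forall_lt_le_of_tendsto_zero {u : ℕ → ℝ} {ε : ℝ} (hu : Tendsto u atTop (𝓝 0))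
    (hε : 0 < ε) (h : ∃ n, ε < u n) : ∃ M, ε < u M ∧ ∀ m, M < m → u m ≤ ε := by
  have hfin : {n | ε < u n}.Finite := by
    refine (Filter.eventually_cofinite.mp ?_).subset fun n (hn : ε < u n) => not_le.mpr hn
    exact Nat.cofinite_eq_atTop ▸ hu.eventually (ge_mem_nhds hε)
  obtain ⟨M, hM, hmax⟩ := Set.exists_max_image _ id hfin h
  exact ⟨M, hM, fun m hm => not_lt.mp fun hlt => (hm.trans_le (hmax m hlt)).false⟩

namespace SmaleSpace

variable {Y Z : Type} [MetricSpace Y] (S : SmaleSpace Y)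

lemma eq_of_forall_dist_iterate_succ_le {π : Y → Z}
    (hπ : ∀ y, InjOn π {y' | StableEquiv S.phi y y'}) {δ ε : ℝ} (hδ : S.IsStableRadius δ)
    (hε : ε ≤ δ) {p q : Y} (hpq : π p = π q)
    (h : ∀ n, dist ((⇑S.phi)^[n + 1] p) ((⇑S.phi)^[n + 1] q) ≤ ε) : p = q := by
  have hmem : S.phi q ∈ S.locStable (S.phi p) ε :=
    hδ.mem_locStable ε hε _ _ (by simpa only [Function.iterate_succ_apply] using h)
  have hstable : StableEquiv S.phi p q :=
    (S.stableEquiv_of_mem_locStable (hε.trans hδ.le_eps) hmem).of_apply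
  exact hπ p (StableEquiv.refl p) hstable hpq

lemma exists_pos_le_dist_of_forall_dist_iterate_succ_le [MetricSpace Z] {π : Y → Z}
    (hcont : Continuous π) (hπ : ∀ y, InjOn π {y' | StableEquiv S.phi y y'}) {δ ε : ℝ}
    (hδ : S.IsStableRadius δ) (hε0 : 0 < ε) (hε : ε ≤ δ) :
    ∃ η > 0, ∀ p q : Y, ε < dist p q →
      (∀ n, dist ((⇑S.phi)^[n + 1] p) ((⇑S.phi)^[n + 1] q) ≤ ε) → η ≤ dist (π p) (π q) := by
  have := S.compact
  set C := {pq : Y × Y | ε ≤ dist pq.1 pq.2} ∩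
    ⋂ n : ℕ, {pq | dist ((⇑S.phi)^[n + 1] pq.1) ((⇑S.phi)^[n + 1] pq.2) ≤ ε}
  have hC : IsCompact C := by
    refine IsClosed.isCompact <| (isClosed_le continuous_const
      (continuous_fst.dist continuous_snd)).inter <|
        isClosed_iInter fun n => isClosed_le ?_ continuous_const
    have hφ : Continuous (⇑S.phi)^[n + 1] := S.phi.continuous.iterate _
    exact (hφ.comp continuous_fst).dist (hφ.comp continuous_snd)
  have hf : Continuous fun pq : Y × Y => dist (π pq.1) (π pq.2) :=
    (hcont.comp continuous_fst).dist (hcont.comp continuous_snd)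
  rcases C.eq_empty_or_nonempty with hempty | hne
  · exact ⟨1, one_pos, fun p q hpq h =>
      (eq_empty_iff_forall_notMem.mp hempty (p, q) ⟨hpq.le, mem_iInter.mpr h⟩).elim⟩
  obtain ⟨m, hm, hmin⟩ := hC.exists_isMinOn hne hf.continuousOn
  refine ⟨_, dist_pos.mpr fun heq => ?_, fun p q hpq h =>
    isMinOn_iff.mp hmin (p, q) ⟨hpq.le, mem_iInter.mpr h⟩⟩
  have hsep : ε ≤ dist m.1 m.2 := hm.1
  rw [S.eq_of_forall_dist_iterate_succ_le hπ hδ hε heq (fun n => mem_iInter.mp hm.2 n),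
    dist_self] at hsep
  linarith

end SmaleSpace

section FactorMap

variable {Y X : Type} [MetricSpace Y] [MetricSpace X] {S : SmaleSpace Y} {T : SmaleSpace X}
  {π : Y → X}

lemma IsFactorMap.exists_image_locStable_subset (hπ : IsFactorMap S.phi T.phi π) {δ : ℝ}
    (hδ : T.IsStableRadius δ) : ∃ ε > 0, ∀ y, π '' S.locStable y ε ⊆ T.locStable (π y) δ := by
  have := S.compact
  obtain ⟨ρ, hρ, hπρ⟩ := Metric.uniformContinuous_iff.mp
    (CompactSpace.uniformContinuous_of_continuous hπ.continuous) δ hδ.pos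
  refine ⟨min (ρ / 2) S.eps, lt_min (half_pos hρ) S.eps_pos, ?_⟩
  rintro y _ ⟨z, hz, rfl⟩
  refine hδ.mem_locStable δ le_rfl _ _ fun n => ?_
  have hclose : dist ((⇑S.phi)^[n] y) ((⇑S.phi)^[n] z) < ρ := by
    linarith [S.dist_iterate_le_of_mem_locStable (min_le_right _ _) hz n,
      min_le_left (ρ / 2) S.eps]
  have hsemiconj := Function.Semiconj.iterate_right hπ.semiconj n
  simpa only [hsemiconj.eq] using (hπρ hclose).le

lemma IsSBij.exists_locStable_subset_image_locStable (hπ : IsSBij S.phi T.phi π) {δ ε : ℝ}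
    (hδ : S.IsStableRadius δ) (hε0 : 0 < ε) (hε : ε ≤ δ) :
    ∃ ε'' > 0, ∀ y, T.locStable (π y) ε'' ⊆ π '' S.locStable y ε := by
  obtain ⟨η, hη, hsep⟩ := S.exists_pos_le_dist_of_forall_dist_iterate_succ_le
    hπ.continuous (fun y => (hπ.bij y).injOn) hδ hε0 hε
  set ε'' := min (η / 2) T.eps
  refine ⟨ε'', lt_min (half_pos hη) T.eps_pos, fun y x hx => ?_⟩
  obtain ⟨z, hyz, rfl⟩ := (hπ.bij y).surjOn (T.stableEquiv_of_mem_locStable (min_le_right _ _) hx)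
  refine ⟨z, ?_, rfl⟩
  by_contra hz
  have hfar : ∃ n, ε < dist ((⇑S.phi)^[n] y) ((⇑S.phi)^[n] z) := by
    by_contra! hnear
    exact hz (hδ.mem_locStable ε hε y z hnear)
  obtain ⟨M, hM, hlast⟩ := exists_lt_forall_lt_le_of_tendsto_zero hyz hε0 hfar
  have hηle := hsep _ _ hM fun n => by
    simpa only [← Function.iterate_add_apply] using hlast (n + 1 + M) (by omega)
  have hsemiconj := Function.Semiconj.iterate_right hπ.semiconj M
  rw [hsemiconj.eq, hsemiconj.eq] at hηle
  linarith [T.dist_iterate_le_of_mem_locStable (min_le_right _ _) hx M, min_le_left (η / 2) T.eps]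

end FactorMap

/-- An `s`-bijective factor map `π : (Y, ψ) → (X, φ)` is a local homeomorphism
from local stable sets of `Y` to local stable sets of `X`: for every `y` there are
`ε, ε', ε'' > 0` such that `π` restricted to `Y^s(y, ε)` is a homeomorphism (an embedding) onto
a subset of `X^s(π(y), ε')` containing `X^s(π(y), ε'')`. -/
theorem sbijective_is_local_homeo_on_stable_sets {Y X : Type} [MetricSpace Y] [MetricSpace X]
    (S : SmaleSpace Y) (T : SmaleSpace X) (π : Y → X)
    (hπ : IsSBij S.phi T.phi π) (y : Y) :
    ∃ ε > (0 : ℝ), ∃ ε' > (0 : ℝ), ∃ ε'' > (0 : ℝ),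
      Topology.IsEmbedding (fun p : S.locStable y ε => π p.1) ∧
      π '' S.locStable y ε ⊆ T.locStable (π y) ε' ∧
      T.locStable (π y) ε'' ⊆ π '' S.locStable y ε := by
  obtain ⟨δS, hδS⟩ := S.exists_isStableRadius
  obtain ⟨δT, hδT⟩ := T.exists_isStableRadius
  obtain ⟨ε₀, hε₀, himage⟩ := hπ.exists_image_locStable_subset hδT
  set ε := min ε₀ δS
  have hε : 0 < ε := lt_min hε₀ hδS.pos
  have hεeps : ε ≤ S.eps := (min_le_right _ _).trans hδS.le_eps
  obtain ⟨ε'', hε'', hsub⟩ := hπ.exists_locStable_subset_image_locStable hδS hε (min_le_right _ _)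
  refine ⟨ε, hε, δT, hδT.pos, ε'', hε'', ?_,
    (image_mono (S.locStable_mono (min_le_left _ _))).trans (himage y), hsub y⟩
  have := S.compact
  exact (S.isClosed_locStable y hεeps).isCompact.isEmbedding_domRestrict hπ.continuous
    (S.injOn_locStable (fun y => (hπ.bij y).injOn) y hεeps)
end
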